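/- For every integer k ≥ 3 there exists a normalized map χ: ℤ_2^k → ℤ_2 such that the cocycle μ_1·∂χ ∈ Z²(ℤ_2^k, ⟨−1⟩) is symmetric and orthogonal with nontrivial coboundary ∂χ; in particular, χ is a GP2A(2^k) of type 1 = (1,…,1), and consequently the expansion χ': ℤ_4^k → ℤ_2 of χ of type 1 is a generalized partially bent function. -/

import Mathlib

/-!
Take `χ(x) = xᵢxⱼ + xⱼxₗ` for three distinct coordinates `i, j, l`. Since `μ₁` is the exponent
form of the dot product, `μ₁·∂χ` is the symmetric bilinear form `B` over `𝔽₂` whose Gram matrix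
is the identity plus the adjacency matrix of the path `i — j — l`; this matrix is invertible, so
`B` is nondegenerate. Hence for `w ≠ 0` the character sum `∑_b (-1)^B(w,b)` vanishes, which is
the orthogonality of the rows of `[(-1)^B(a,b)]`. Writing `g ∈ ℤ₄^k` as `ε + 2δ` with
`ε, δ ∈ 𝔽₂^k`, the autocorrelation of `χ'` at `g` becomes `± 2^k ∑_ε (-1)^B(g mod 2, ε)`:
it is `0` unless `g mod 2 = 0`, i.e. `g ∈ L`, and then it has modulus `4^k`.
-/

open scoped BigOperators

noncomputable section

/-- `zeta k` is the complex `k`-th root of unity `exp(2π√-1/k)`; `zeta 2 = -1`. -/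
def zeta (k : ℕ) : ℂ := Complex.exp (2 * Real.pi * Complex.I / k)

/-- Periodic autocorrelation of a map `f : A → ℤ_2` at shift `w`. -/
def AC {A : Type*} [AddCommGroup A] [Fintype A] (h : ℕ) (f : A → ZMod h) (w : A) : ℂ :=
  ∑ g : A, zeta h ^ (f g - f (g + w)).val

/-- A Butson Hadamard matrix in `BH(n,k)`; for `k = 2` a Hadamard matrix. -/
def IsBH {ι : Type*} [Fintype ι] [DecidableEq ι] (n k : ℕ) (M : Matrix ι ι ℂ) : Prop :=
  Fintype.card ι = n ∧ (∀ a b, ∃ j : ℕ, M a b = zeta k ^ j) ∧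
    M * M.conjTranspose = (n : ℂ) • (1 : Matrix ι ι ℂ)

/-- The cocycle `μ_1 ∈ Z²(ℤ_2^k, ⟨-1⟩)` in exponent form:
`μ_1(x,y) = Π_i (-1)^{⌊(x_i+y_i)/2⌋}`. -/
def muOne (k : ℕ) (x y : Fin k → ZMod 2) : ZMod 2 :=
  ((∑ i, ((x i).val + (y i).val) / 2 : ℕ) : ZMod 2)

/-- The expansion `χ' : ℤ_4^k → ℤ_2` of type `1 = (1,…,1)` of `χ : ℤ_2^k → ℤ_2`:
`χ'(g) = χ(g mod 2) + Σ_i ⌊g_i/2⌋ (mod 2)`. -/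
def expandOne (k : ℕ) (χ : (Fin k → ZMod 2) → ZMod 2)
    (g : Fin k → ZMod 4) : ZMod 2 :=
  χ (fun i => ((g i).val : ZMod 2)) + ((∑ i, (g i).val / 2 : ℕ) : ZMod 2)

/-- `L = {g ∈ ℤ_4^k : every g_i ∈ {0,2}}`. -/
def LOne (k : ℕ) : Set (Fin k → ZMod 4) :=
  {g | ∀ i, 2 ∣ (g i).val}

open LinearMap (BilinForm)

theorem zeta_two : zeta 2 = -1 := by
  rw [zeta, ← Complex.exp_pi_mul_I]
  congr 1
  push_cast
  ring

theorem neg_one_pow_val_add (u v : ZMod 2) :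
    (-1 : ℂ) ^ (u + v).val = (-1) ^ u.val * (-1) ^ v.val := by
  rw [ZMod.val_add, ← neg_one_pow_eq_pow_mod_two, pow_add]

theorem neg_one_pow_val_sub (u v : ZMod 2) :
    (-1 : ℂ) ^ (u - v).val = (-1) ^ u.val * (-1) ^ v.val := by
  rw [CharTwo.sub_eq_add, neg_one_pow_val_add]

theorem sum_neg_one_pow_val_eq_zero {V : Type*} [AddCommGroup V] [Fintype V]
    (f : V →+ ZMod 2) (hf : f ≠ 0) : ∑ v, (-1 : ℂ) ^ (f v).val = 0 := by
  obtain ⟨v₀, hv₀⟩ : ∃ v₀, f v₀ ≠ 0 := by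
    by_contra! h
    exact hf (AddMonoidHom.ext h)
  have hflip : ∑ v, (-1 : ℂ) ^ (f v).val = -∑ v, (-1 : ℂ) ^ (f v).val := by
    rw [← Finset.sum_neg_distrib]
    refine Fintype.sum_equiv (Equiv.addRight v₀) _ _ fun v => ?_
    have h1 : f v₀ = 1 := (by decide : ∀ u : ZMod 2, u ≠ 0 → u = 1) _ hv₀
    rw [Equiv.coe_addRight, map_add, neg_one_pow_val_add, h1, show (1 : ZMod 2).val = 1 from rfl,
      pow_one, mul_neg_one, neg_neg]
  exact CharZero.eq_neg_self_iff.mp hflip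

section BilinForm

variable {V : Type*} [AddCommGroup V] [Module (ZMod 2) V] [Fintype V] [DecidableEq V]

theorem sum_neg_one_pow_val_bilinForm {B : BilinForm (ZMod 2) V} (hB : B.SeparatingLeft)
    (w : V) : ∑ v, (-1 : ℂ) ^ (B w v).val = if w = 0 then (Fintype.card V : ℂ) else 0 := by
  split_ifs with hw
  · simp [hw]
  · refine sum_neg_one_pow_val_eq_zero (B w).toAddMonoidHom fun h => hw (hB w fun v => ?_)
    exact DFunLike.congr_fun h v

theorem isBH_of_separatingLeft {B : BilinForm (ZMod 2) V} (hB : B.SeparatingLeft) :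
    IsBH (Fintype.card V) 2 (Matrix.of fun a b => zeta 2 ^ (B a b).val) := by
  refine ⟨rfl, fun a b => ⟨_, rfl⟩, ?_⟩
  ext a c
  simp only [Matrix.mul_apply, Matrix.conjTranspose_apply, Matrix.of_apply, zeta_two, star_pow,
    star_neg, star_one, ← neg_one_pow_val_sub, ← LinearMap.sub_apply, ← map_sub,
    sum_neg_one_pow_val_bilinForm hB, sub_eq_zero, Matrix.smul_apply, Matrix.one_apply,
    smul_eq_mul, mul_ite, mul_one, mul_zero]

end BilinForm

theorem muOne_eq_dotProduct {k : ℕ} (x y : Fin k → ZMod 2) : muOne k x y = x ⬝ᵥ y := by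
  rw [muOne, Nat.cast_sum]
  exact Finset.sum_congr rfl fun i _ =>
    (by decide : ∀ u v : ZMod 2, (((u.val + v.val) / 2 : ℕ) : ZMod 2) = u * v) _ _

def liftFour (ε δ : ZMod 2) : ZMod 4 := ((ε.val + 2 * δ.val : ℕ) : ZMod 4)

theorem liftFour_injective2 : Function.Injective2 liftFour := by
  unfold Function.Injective2
  decide

theorem val_cast_liftFour_add :
    ∀ (ε δ : ZMod 2) (u : ZMod 4), ((liftFour ε δ + u).val : ZMod 2) = ε + (u.val : ZMod 2) := by
  decide

theorem val_div_two_liftFour_add : ∀ (ε δ : ZMod 2) (u : ZMod 4),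
    (((liftFour ε δ + u).val / 2 : ℕ) : ZMod 2)
      = δ + ((u.val / 2 : ℕ) : ZMod 2) + ε * (u.val : ZMod 2) := by
  decide

section Expansion

variable {k : ℕ}

def reduceTwo (g : Fin k → ZMod 4) : Fin k → ZMod 2 := fun i => ((g i).val : ZMod 2)

def halfSum (g : Fin k → ZMod 4) : ZMod 2 := ((∑ i, (g i).val / 2 : ℕ) : ZMod 2)

def liftFourPi (p : (Fin k → ZMod 2) × (Fin k → ZMod 2)) : Fin k → ZMod 4 :=
  fun i => liftFour (p.1 i) (p.2 i)

theorem liftFourPi_bijective : Function.Bijective (liftFourPi (k := k)) := by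
  rw [Fintype.bijective_iff_injective_and_card]
  refine ⟨fun p q h => ?_, by simp [← Nat.mul_pow]⟩
  have hpq i := liftFour_injective2 (congrFun h i)
  exact Prod.ext (funext fun i => (hpq i).1) (funext fun i => (hpq i).2)

theorem reduceTwo_eq_zero_iff (g : Fin k → ZMod 4) : reduceTwo g = 0 ↔ g ∈ LOne k := by
  simp only [funext_iff, reduceTwo, LOne, Set.mem_ofPred_eq, Pi.zero_apply,
    ZMod.natCast_eq_zero_iff]

theorem reduceTwo_liftFourPi_add (ε δ : Fin k → ZMod 2) (g : Fin k → ZMod 4) :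
    reduceTwo (liftFourPi (ε, δ) + g) = ε + reduceTwo g :=
  funext fun i => val_cast_liftFour_add (ε i) (δ i) (g i)

theorem halfSum_liftFourPi_add (ε δ : Fin k → ZMod 2) (g : Fin k → ZMod 4) :
    halfSum (liftFourPi (ε, δ) + g) = ∑ i, δ i + halfSum g + ε ⬝ᵥ reduceTwo g := by
  simp only [halfSum, Nat.cast_sum, Pi.add_apply, liftFourPi, val_div_two_liftFour_add,
    Finset.sum_add_distrib, dotProduct, reduceTwo]

theorem expandOne_liftFourPi_add (χ : (Fin k → ZMod 2) → ZMod 2) (ε δ : Fin k → ZMod 2)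
    (g : Fin k → ZMod 4) : expandOne k χ (liftFourPi (ε, δ) + g)
      = χ (ε + reduceTwo g) + (∑ i, δ i + halfSum g + ε ⬝ᵥ reduceTwo g) := by
  rw [← halfSum_liftFourPi_add, ← reduceTwo_liftFourPi_add ε δ]
  rfl

theorem expandOne_liftFourPi (χ : (Fin k → ZMod 2) → ZMod 2) (ε δ : Fin k → ZMod 2) :
    expandOne k χ (liftFourPi (ε, δ)) = χ ε + ∑ i, δ i := by
  have hzero : reduceTwo (0 : Fin k → ZMod 4) = 0 := funext fun _ => by simp [reduceTwo]
  simpa [hzero, halfSum] using expandOne_liftFourPi_add χ ε δ 0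

theorem AC_expandOne (χ : (Fin k → ZMod 2) → ZMod 2) (g : Fin k → ZMod 4) :
    AC 2 (expandOne k χ) g = 2 ^ k * ∑ ε, (-1 : ℂ) ^
      (χ ε - χ (ε + reduceTwo g) - halfSum g - ε ⬝ᵥ reduceTwo g).val := by
  have hterm (p : (Fin k → ZMod 2) × (Fin k → ZMod 2)) :
      (-1 : ℂ) ^ (χ p.1 - χ (p.1 + reduceTwo g) - halfSum g - p.1 ⬝ᵥ reduceTwo g).val
        = zeta 2 ^ (expandOne k χ (liftFourPi p) - expandOne k χ (liftFourPi p + g)).val := by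
    obtain ⟨ε, δ⟩ := p
    rw [zeta_two, expandOne_liftFourPi, expandOne_liftFourPi_add]
    ring_nf
  rw [AC, ← Fintype.sum_bijective _ liftFourPi_bijective _ _ hterm, Fintype.sum_prod_type]
  simp [Finset.mul_sum]

theorem AC_expandOne_eq {χ : (Fin k → ZMod 2) → ZMod 2}
    {B : BilinForm (ZMod 2) (Fin k → ZMod 2)} (hsymm : B.IsSymm) (hB : B.SeparatingLeft)
    (hχ : ∀ x y, x ⬝ᵥ y + (χ (x + y) - χ x - χ y) = B x y) (g : Fin k → ZMod 4) :
    AC 2 (expandOne k χ) g = 2 ^ k * (-1 : ℂ) ^ (χ (reduceTwo g) + halfSum g).val *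
      if reduceTwo g = 0 then 2 ^ k else 0 := by
  have hexp (ε : Fin k → ZMod 2) :
      χ ε - χ (ε + reduceTwo g) - halfSum g - ε ⬝ᵥ reduceTwo g
        = -(B (reduceTwo g) ε + (χ (reduceTwo g) + halfSum g)) := by
    rw [← hsymm.eq, ← hχ]
    ring
  simp only [AC_expandOne, hexp, ZMod.neg_eq_self_mod_two, neg_one_pow_val_add, ← Finset.sum_mul,
    sum_neg_one_pow_val_bilinForm hB]
  split_ifs <;> simp only [Fintype.card_fun, ZMod.card, Fintype.card_fin, Nat.cast_pow,
    Nat.cast_ofNat, mul_zero, zero_mul]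
  ring

theorem AC_expandOne_of_not_mem {χ : (Fin k → ZMod 2) → ZMod 2}
    {B : BilinForm (ZMod 2) (Fin k → ZMod 2)} (hsymm : B.IsSymm) (hB : B.SeparatingLeft)
    (hχ : ∀ x y, x ⬝ᵥ y + (χ (x + y) - χ x - χ y) = B x y) {g : Fin k → ZMod 4}
    (hg : g ∉ LOne k) : AC 2 (expandOne k χ) g = 0 := by
  rw [AC_expandOne_eq hsymm hB hχ, if_neg ((reduceTwo_eq_zero_iff g).not.mpr hg), mul_zero]

theorem norm_AC_expandOne_of_mem {χ : (Fin k → ZMod 2) → ZMod 2}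
    {B : BilinForm (ZMod 2) (Fin k → ZMod 2)} (hsymm : B.IsSymm) (hB : B.SeparatingLeft)
    (hχ : ∀ x y, x ⬝ᵥ y + (χ (x + y) - χ x - χ y) = B x y) {g : Fin k → ZMod 4}
    (hg : g ∈ LOne k) : ‖AC 2 (expandOne k χ) g‖ = 4 ^ k := by
  rw [AC_expandOne_eq hsymm hB hχ, if_pos ((reduceTwo_eq_zero_iff g).mpr hg)]
  norm_num [← mul_pow]

end Expansion

section PathForm

variable {ι : Type*} (i j l : ι)

def pathChi (x : ι → ZMod 2) : ZMod 2 := x i * x j + x j * x l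

theorem pathChi_zero : pathChi i j l 0 = 0 := by
  simp [pathChi]

variable {i j l} in
theorem exists_pathChi_coboundary_ne_zero [DecidableEq ι] (hij : i ≠ j) (hil : i ≠ l)
    (hjl : j ≠ l) :
    ∃ a b : ι → ZMod 2, pathChi i j l (a + b) - pathChi i j l a - pathChi i j l b ≠ 0 :=
  ⟨Pi.single i 1, Pi.single j 1, by simp [pathChi, hij, hil.symm, hjl.symm]⟩

variable [Fintype ι]

def pathForm : BilinForm (ZMod 2) (ι → ZMod 2) :=
  LinearMap.mk₂ (ZMod 2) (fun x y => x ⬝ᵥ y + (x i * y j + x j * y i + x j * y l + x l * y j))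
    (fun _ _ _ => by simp only [add_dotProduct, Pi.add_apply]; ring)
    (fun _ _ _ => by simp only [smul_dotProduct, Pi.smul_apply, smul_eq_mul]; ring)
    (fun _ _ _ => by simp only [dotProduct_add, Pi.add_apply]; ring)
    (fun _ _ _ => by simp only [dotProduct_smul, Pi.smul_apply, smul_eq_mul]; ring)

theorem pathForm_apply (x y : ι → ZMod 2) :
    pathForm i j l x y = x ⬝ᵥ y + (x i * y j + x j * y i + x j * y l + x l * y j) :=
  rfl

theorem pathForm_isSymm : (pathForm i j l).IsSymm :=
  ⟨fun x y => by rw [pathForm_apply, pathForm_apply, dotProduct_comm]; ring⟩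

theorem dotProduct_add_coboundary_pathChi (x y : ι → ZMod 2) :
    x ⬝ᵥ y + (pathChi i j l (x + y) - pathChi i j l x - pathChi i j l y) = pathForm i j l x y := by
  simp only [pathForm_apply, pathChi, Pi.add_apply]
  ring

variable {i j l} [DecidableEq ι]

theorem pathForm_separatingLeft (hij : i ≠ j) (hil : i ≠ l) (hjl : j ≠ l) :
    (pathForm i j l).SeparatingLeft := by
  intro w hw
  have hsingle (m : ι) := hw (Pi.single m 1)
  simp only [pathForm_apply, dotProduct_single, mul_one, Pi.single_apply] at hsingle
  have hi := hsingle i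
  have hj := hsingle j
  have hl := hsingle l
  simp only [hij, hil, hjl, hij.symm, hil.symm, hjl.symm, if_true, if_false, mul_one, mul_zero,
    add_zero, zero_add] at hi hj hl
  -- summing the three equations leaves `w j = 0` in characteristic two
  have hwj : w j = 0 := by linear_combination (norm := (ring_nf; reduce_mod_char)) hi + hj + hl
  funext m
  rw [Pi.zero_apply]
  by_cases hm : m = i ∨ m = j ∨ m = l
  · rcases hm with rfl | rfl | rfl
    · linear_combination hi - hwj
    · exact hwj
    · linear_combination hl - hwj
  · obtain ⟨hmi, hmj, hml⟩ : m ≠ i ∧ m ≠ j ∧ m ≠ l := by tauto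
    simpa [hmi.symm, hmj.symm, hml.symm] using hsingle m

end PathForm

/-- for every `k ≥ 3` there is a normalized map `χ : ℤ_2^k → ℤ_2`
such that the cocycle `μ_1·∂χ ∈ Z²(ℤ_2^k, ⟨-1⟩)` is symmetric and orthogonal with
nontrivial coboundary `∂χ`; in particular `χ` is a `GP2A(2^k)` of type `1`, and
the expansion `χ' : ℤ_4^k → ℤ_2` of `χ` of type `1` is a generalized partially
bent function. -/
theorem exists_GPBA_all_k
    (k : ℕ) (hk : 3 ≤ k) :
    ∃ χ : (Fin k → ZMod 2) → ZMod 2, χ 0 = 0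
      ∧ (∀ a b, muOne k a b + (χ (a + b) - χ a - χ b)
          = muOne k b a + (χ (b + a) - χ b - χ a))
      ∧ IsBH (2 ^ k) 2
          (Matrix.of fun a b : Fin k → ZMod 2 =>
            zeta 2 ^ (muOne k a b + (χ (a + b) - χ a - χ b)).val)
      ∧ (∃ a b, χ (a + b) - χ a - χ b ≠ 0)
      ∧ (∀ g : Fin k → ZMod 4, g ∉ LOne k → AC 2 (expandOne k χ) g = 0)
      ∧ (∀ x : Fin k → ZMod 4,
          ‖AC 2 (expandOne k χ) x‖ = 0
          ∨ ‖AC 2 (expandOne k χ) x‖ = (4 : ℝ) ^ k) := by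
  let i : Fin k := ⟨0, by omega⟩
  let j : Fin k := ⟨1, by omega⟩
  let l : Fin k := ⟨2, by omega⟩
  have hij : i ≠ j := by simp [i, j, Fin.ext_iff]
  have hil : i ≠ l := by simp [i, l, Fin.ext_iff]
  have hjl : j ≠ l := by simp [j, l, Fin.ext_iff]
  have hsymm := pathForm_isSymm i j l
  have hsep := pathForm_separatingLeft hij hil hjl
  have hχ := dotProduct_add_coboundary_pathChi i j l
  have hψ (a b : Fin k → ZMod 2) :
      muOne k a b + (pathChi i j l (a + b) - pathChi i j l a - pathChi i j l b)
        = pathForm i j l a b := by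
    rw [muOne_eq_dotProduct, hχ]
  refine ⟨pathChi i j l, pathChi_zero i j l, fun a b => ?_, ?_,
    exists_pathChi_coboundary_ne_zero hij hil hjl, fun _ => AC_expandOne_of_not_mem hsymm hsep hχ,
    fun g => ?_⟩
  · rw [hψ, hψ, hsymm.eq]
  · simp_rw [hψ]
    simpa using isBH_of_separatingLeft hsep
  · by_cases hg : g ∈ LOne k
    · exact Or.inr (norm_AC_expandOne_of_mem hsymm hsep hχ hg)
    · exact Or.inl (by rw [AC_expandOne_of_not_mem hsymm hsep hχ hg, norm_zero])

end
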